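/- Let (D,F = (f₁,f₂)) be a valid tight pair that is not a hard pair and such that the underlying graph UG(D) is a cycle. Then D is F-dicolourable. -/

import Mathlib

open scoped Classical

/-- A finite digraph with vertex set a `Finset ℕ` and no loops.
Both arcs `(u,v)` and `(v,u)` may be present (a digon). -/
structure Digraph' where
  verts : Finset ℕ
  arcs : Finset (ℕ × ℕ)
  mem_fst : ∀ a ∈ arcs, a.1 ∈ verts
  mem_snd : ∀ a ∈ arcs, a.2 ∈ verts
  no_loops : ∀ a ∈ arcs, a.1 ≠ a.2

namespace Digraph'

/-- In-degree of `v`. -/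
def inDeg (D : Digraph') (v : ℕ) : ℕ := (D.arcs.filter fun a => a.2 = v).card

/-- Out-degree of `v`. -/
def outDeg (D : Digraph') (v : ℕ) : ℕ := (D.arcs.filter fun a => a.1 = v).card

/-- In-neighbourhood of `v`. -/
def inNbrs (D : Digraph') (v : ℕ) : Finset ℕ := (D.arcs.filter fun a => a.2 = v).image Prod.fst

/-- Out-neighbourhood of `v`. -/
def outNbrs (D : Digraph') (v : ℕ) : Finset ℕ := (D.arcs.filter fun a => a.1 = v).image Prod.snd

/-- Neighbourhood of `v` in the underlying graph. -/
def ugNbrs (D : Digraph') (v : ℕ) : Finset ℕ := D.inNbrs v ∪ D.outNbrs v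

/-- `H` is a subdigraph of `D`. -/
def IsSubdigraph (H D : Digraph') : Prop := H.verts ⊆ D.verts ∧ H.arcs ⊆ D.arcs

/-- The subdigraph of `D` induced by the vertex set `X`. -/
def induce (D : Digraph') (X : Finset ℕ) : Digraph' where
  verts := D.verts ∩ X
  arcs := D.arcs.filter fun a => a.1 ∈ X ∧ a.2 ∈ X
  mem_fst := fun a ha => by
    simp only [Finset.mem_filter] at ha
    exact Finset.mem_inter.mpr ⟨D.mem_fst a ha.1, ha.2.1⟩
  mem_snd := fun a ha => by
    simp only [Finset.mem_filter] at ha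
    exact Finset.mem_inter.mpr ⟨D.mem_snd a ha.1, ha.2.2⟩
  no_loops := fun a ha => by
    simp only [Finset.mem_filter] at ha
    exact D.no_loops a ha.1

/-- `D − X`, the digraph obtained from `D` by deleting the vertices of `X`. -/
def del (D : Digraph') (X : Finset ℕ) : Digraph' := D.induce (D.verts \ X)

/-- Adjacency in the underlying graph of `D`. -/
def ugAdj (D : Digraph') (u v : ℕ) : Prop :=
  u ∈ D.verts ∧ v ∈ D.verts ∧ ((u, v) ∈ D.arcs ∨ (v, u) ∈ D.arcs)

/-- `D` is connected, i.e. its underlying graph is connected. -/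
def Connected (D : Digraph') : Prop :=
  D.verts.Nonempty ∧ ∀ u ∈ D.verts, ∀ v ∈ D.verts, Relation.ReflTransGen D.ugAdj u v

/-- `D` is biconnected: it has at least two vertices, is connected, and stays
connected after the deletion of any vertex. -/
def Biconnected (D : Digraph') : Prop :=
  2 ≤ D.verts.card ∧ D.Connected ∧ ∀ x ∈ D.verts, (D.del {x}).Connected

/-- Every arc of `D` lies in a digon. -/
def Bidirected (D : Digraph') : Prop := ∀ a ∈ D.arcs, (a.2, a.1) ∈ D.arcs

/-- The underlying graph of `D` is a cycle. -/
def IsCycleUG (D : Digraph') : Prop :=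
  D.Connected ∧ ∀ v ∈ D.verts, (D.ugNbrs v).card = 2

/-- `D` is a bidirected odd cycle. -/
def BidirectedOddCycle (D : Digraph') : Prop :=
  D.Bidirected ∧ D.IsCycleUG ∧ Odd D.verts.card

/-- `D` is a bidirected complete graph. -/
def BidirectedComplete (D : Digraph') : Prop :=
  ∀ u ∈ D.verts, ∀ v ∈ D.verts, u ≠ v → (u, v) ∈ D.arcs

/-- `D` is strictly-`f`-bidegenerate: every nonempty subdigraph `H` of `D` contains a
vertex `v` with `d⁻_H(v) < f⁻(v)` or `d⁺_H(v) < f⁺(v)`. -/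
def StrictlyBidegenerate (D : Digraph') (f : ℕ → ℕ × ℕ) : Prop :=
  ∀ H : Digraph', H.IsSubdigraph D → H.verts.Nonempty →
    ∃ v ∈ H.verts, H.inDeg v < (f v).1 ∨ H.outDeg v < (f v).2

/-- `α` is an `F`-dicolouring of `D`: for each colour `i`, the subdigraph induced by the
vertices coloured `i` is strictly-`Fᵢ`-bidegenerate. -/
def IsDicolouring (D : Digraph') (s : ℕ) (F : Fin s → ℕ → ℕ × ℕ) (α : ℕ → Fin s) : Prop :=
  ∀ i : Fin s, (D.induce (D.verts.filter fun v => α v = i)).StrictlyBidegenerate (F i)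

/-- `D` is `F`-dicolourable. -/
def Dicolourable (D : Digraph') (s : ℕ) (F : Fin s → ℕ → ℕ × ℕ) : Prop :=
  ∃ α : ℕ → Fin s, D.IsDicolouring s F α

/-- `(D,F)` is a valid pair: `D` is connected and the colour budget dominates the
in- and out-degrees at every vertex. -/
def ValidPair (D : Digraph') (s : ℕ) (F : Fin s → ℕ → ℕ × ℕ) : Prop :=
  D.Connected ∧ ∀ v ∈ D.verts,
    D.inDeg v ≤ ∑ i, (F i v).1 ∧ D.outDeg v ≤ ∑ i, (F i v).2

/-- `(D,F)` is tight: both budget inequalities are equalities at every vertex. -/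
def Tight (D : Digraph') (s : ℕ) (F : Fin s → ℕ → ℕ × ℕ) : Prop :=
  ∀ v ∈ D.verts, ∑ i, (F i v).1 = D.inDeg v ∧ ∑ i, (F i v).2 = D.outDeg v

/-- Hard pairs, defined inductively: monochromatic, bicycle, complete, and join hard pairs. -/
inductive IsHardPair : (s : ℕ) → Digraph' → (Fin s → ℕ → ℕ × ℕ) → Prop
  | mono {s : ℕ} {D : Digraph'} {F : Fin s → ℕ → ℕ × ℕ} (i : Fin s)
      (hbi : D.Biconnected)
      (hi : ∀ v ∈ D.verts, F i v = (D.inDeg v, D.outDeg v))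
      (hk : ∀ k : Fin s, k ≠ i → ∀ v ∈ D.verts, F k v = (0, 0)) :
      IsHardPair s D F
  | bicycle {s : ℕ} {D : Digraph'} {F : Fin s → ℕ → ℕ × ℕ} (i j : Fin s) (hij : i ≠ j)
      (hD : D.BidirectedOddCycle)
      (hi : ∀ v ∈ D.verts, F i v = (1, 1))
      (hj : ∀ v ∈ D.verts, F j v = (1, 1))
      (hk : ∀ k : Fin s, k ≠ i → k ≠ j → ∀ v ∈ D.verts, F k v = (0, 0)) :
      IsHardPair s D F
  | complete {s : ℕ} {D : Digraph'} {F : Fin s → ℕ → ℕ × ℕ}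
      (hD : D.BidirectedComplete)
      (hconst : ∀ k : Fin s, ∀ u ∈ D.verts, ∀ v ∈ D.verts, F k u = F k v)
      (hsym : ∀ k : Fin s, ∀ v ∈ D.verts, (F k v).1 = (F k v).2)
      (hsum : ∀ v ∈ D.verts, ∑ k, (F k v).2 = D.verts.card - 1) :
      IsHardPair s D F
  | join {s : ℕ} {D : Digraph'} {F : Fin s → ℕ → ℕ × ℕ}
      (D₁ D₂ : Digraph') (F₁ F₂ : Fin s → ℕ → ℕ × ℕ) (x : ℕ)
      (h₁ : IsHardPair s D₁ F₁) (h₂ : IsHardPair s D₂ F₂)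
      (hx : D₁.verts ∩ D₂.verts = {x})
      (hV : D.verts = D₁.verts ∪ D₂.verts)
      (hA : D.arcs = D₁.arcs ∪ D₂.arcs)
      (hF₁ : ∀ k : Fin s, ∀ v ∈ D₁.verts, v ≠ x → F k v = F₁ k v)
      (hF₂ : ∀ k : Fin s, ∀ v ∈ D₂.verts, v ≠ x → F k v = F₂ k v)
      (hFx : ∀ k : Fin s, F k x = ((F₁ k x).1 + (F₂ k x).1, (F₁ k x).2 + (F₂ k x).2)) :
      IsHardPair s D F

/-- The sequence of functions of the pair reduced from `(D,F)` by a colouring `α` of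
`X ⊆ V(D)`: the budget of colour `i` at `u` decreases by the number of in- and out-neighbours
of `u` inside `X` coloured `i` (truncated at `0`). -/
def reduceF (D : Digraph') {s : ℕ} (F : Fin s → ℕ → ℕ × ℕ) (X : Finset ℕ) (α : ℕ → Fin s) :
    Fin s → ℕ → ℕ × ℕ :=
  fun i u =>
    ((F i u).1 - ((D.inNbrs u ∩ X).filter fun w => α w = i).card,
     (F i u).2 - ((D.outNbrs u ∩ X).filter fun w => α w = i).card)

/-- `B` is a block of `D`: a maximal biconnected subdigraph. -/
def IsBlock (B D : Digraph') : Prop :=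
  B.IsSubdigraph D ∧ B.Biconnected ∧
    ∀ B' : Digraph', B'.IsSubdigraph D → B'.Biconnected → B.IsSubdigraph B' → B' = B

/-- `x` is a cut-vertex of `D`: `D − x` is disconnected. -/
def CutVertex (D : Digraph') (x : ℕ) : Prop :=
  x ∈ D.verts ∧ (D.del {x}).verts.Nonempty ∧ ¬ (D.del {x}).Connected

/-- `B` is an end-block of `D` whose unique cut-vertex (of `D`) in `B` is `x`. -/
def IsEndBlockAt (B D : Digraph') (x : ℕ) : Prop :=
  IsBlock B D ∧ x ∈ B.verts ∧ D.CutVertex x ∧ ∀ y ∈ B.verts, D.CutVertex y → y = x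

/-- `B` is a monochromatic hard end-block with cut-vertex `x`, for colour `c`. -/
def MonoHardEndBlock {s : ℕ} (F : Fin s → ℕ → ℕ × ℕ) (B : Digraph') (x : ℕ) (c : Fin s) : Prop :=
  B.inDeg x ≤ (F c x).1 ∧ B.outDeg x ≤ (F c x).2 ∧
    ∀ v ∈ B.verts, v ≠ x →
      F c v = (B.inDeg v, B.outDeg v) ∧ ∀ k : Fin s, k ≠ c → F k v = (0, 0)

/-- `B` is a bicycle hard end-block with cut-vertex `x`. -/
def BicycleHardEndBlock {s : ℕ} (F : Fin s → ℕ → ℕ × ℕ) (B : Digraph') (x : ℕ) : Prop :=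
  B.BidirectedOddCycle ∧
    ∃ i j : Fin s, i ≠ j ∧
      1 ≤ (F i x).1 ∧ 1 ≤ (F i x).2 ∧ 1 ≤ (F j x).1 ∧ 1 ≤ (F j x).2 ∧
      ∀ v ∈ B.verts, v ≠ x →
        F i v = (1, 1) ∧ F j v = (1, 1) ∧ ∀ k : Fin s, k ≠ i → k ≠ j → F k v = (0, 0)

/-- `B` is a complete hard end-block with cut-vertex `x`. -/
def CompleteHardEndBlock {s : ℕ} (F : Fin s → ℕ → ℕ × ℕ) (B : Digraph') (x : ℕ) : Prop :=
  B.BidirectedComplete ∧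
    (∀ k : Fin s, ∀ u ∈ B.verts, u ≠ x → ∀ v ∈ B.verts, v ≠ x → F k u = F k v) ∧
    (∀ k : Fin s, ∀ v ∈ B.verts, v ≠ x → (F k v).1 = (F k v).2) ∧
    (∀ k : Fin s, ∀ u ∈ B.verts, u ≠ x → (F k u).1 ≤ (F k x).1 ∧ (F k u).2 ≤ (F k x).2)

/-- `B` is a hard end-block with cut-vertex `x`. -/
def HardEndBlock {s : ℕ} (F : Fin s → ℕ → ℕ × ℕ) (B : Digraph') (x : ℕ) : Prop :=
  (∃ c : Fin s, MonoHardEndBlock F B x c) ∨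
    BicycleHardEndBlock F B x ∨ CompleteHardEndBlock F B x

/-- `(D',F')` is the contraction of `(D,F)` with respect to the hard end-block `B` with
cut-vertex `x`, where `u` is a vertex of `B` other than `x`. -/
def IsContraction (D : Digraph') {s : ℕ} (F : Fin s → ℕ → ℕ × ℕ) (B : Digraph') (x u : ℕ)
    (D' : Digraph') (F' : Fin s → ℕ → ℕ × ℕ) : Prop :=
  D' = D.del (B.verts \ {x}) ∧
  (∀ k : Fin s, ∀ v ∈ D'.verts, v ≠ x → F' k v = F k v) ∧
  ((∃ c : Fin s, MonoHardEndBlock F B x c ∧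
      F' c x = ((F c x).1 - B.inDeg x, (F c x).2 - B.outDeg x) ∧
      ∀ k : Fin s, k ≠ c → F' k x = F k x) ∨
   ((¬ ∃ c : Fin s, MonoHardEndBlock F B x c) ∧
      ∀ k : Fin s, F' k x = ((F k x).1 - (F k u).1, (F k x).2 - (F k u).2)))

/-- Property (E): all the functions exceed `1` in the relevant coordinate at every vertex
having an in-(resp. out-)neighbour. -/
def PropE (D : Digraph') {s : ℕ} (F : Fin s → ℕ → ℕ × ℕ) : Prop :=
  ∀ x ∈ D.verts, ∀ c : Fin s,
    (0 < D.inDeg x → 1 ≤ (F c x).1) ∧ (0 < D.outDeg x → 1 ≤ (F c x).2)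

/-- `C` is a directed cycle: connected, and every vertex has in- and out-degree one. -/
def IsDirectedCycle (C : Digraph') : Prop :=
  C.Connected ∧ ∀ v ∈ C.verts, C.inDeg v = 1 ∧ C.outDeg v = 1

/-- `D` is acyclic: it contains no directed cycle. -/
def AcyclicD (D : Digraph') : Prop :=
  ¬ ∃ C : Digraph', C.IsSubdigraph D ∧ C.IsDirectedCycle

/-- `α` is a `k`-dicolouring of `D`: every colour class induces an acyclic subdigraph. -/
def IsKDicolouring (D : Digraph') (k : ℕ) (α : ℕ → Fin k) : Prop :=
  ∀ i : Fin k, AcyclicD (D.induce (D.verts.filter fun v => α v = i))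

/-- The dichromatic number of `D`. -/
noncomputable def dichromatic (D : Digraph') : ℕ :=
  sInf {k : ℕ | ∃ α : ℕ → Fin k, D.IsKDicolouring k α}

end Digraph'

open Digraph'

/-! Vertices are removed one at a time, and a vertex may be removed from its colour class once
it has fewer in- or out-neighbours left there than its budget; such an elimination order
certifies strict bidegeneracy. Enumerate the cycle as `g 0, …, g (n - 1)` and remove vertices in
this order.

If some vertex has an empty budget in a colour `i`, either all vertices do (a monochromatic hard
pair) or such a vertex `z = g 0` has a neighbour `g (-1)` with a nonempty `i`-budget. Colour `z`
with the other colour and then `g (n - 1), g (n - 2), …, g 1` in turn: a vertex keeps the colour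
of its successor when the other colour has an empty budget there, and takes the other colour
otherwise. If no budget is empty, colour alternately; on an odd cycle this leaves one
monochromatic edge `g (-1) g 0`, which is harmless when `g 0` has, in its colour, more budget
than the arcs between it and `g (-1)`. When no vertex has such slack for either neighbour,
tightness forces every budget to be `(1, 1)` and every arc to lie in a digon: a bicycle. -/

namespace Digraph'

variable {D : Digraph'} {u v a : ℕ}

theorem mem_inNbrs : u ∈ D.inNbrs v ↔ (u, v) ∈ D.arcs := by
  simp [inNbrs]

theorem mem_outNbrs : u ∈ D.outNbrs v ↔ (v, u) ∈ D.arcs := by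
  simp [outNbrs]

theorem mem_ugNbrs : u ∈ D.ugNbrs v ↔ (u, v) ∈ D.arcs ∨ (v, u) ∈ D.arcs := by
  simp [ugNbrs, mem_inNbrs, mem_outNbrs]

theorem mem_ugNbrs_comm : u ∈ D.ugNbrs v ↔ v ∈ D.ugNbrs u := by
  rw [mem_ugNbrs, mem_ugNbrs, or_comm]

theorem mem_verts_of_mem_ugNbrs (h : u ∈ D.ugNbrs v) : v ∈ D.verts := by
  rcases mem_ugNbrs.mp h with h | h
  exacts [D.mem_snd _ h, D.mem_fst _ h]

theorem ne_of_mem_ugNbrs (h : u ∈ D.ugNbrs v) : u ≠ v := by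
  rcases mem_ugNbrs.mp h with h | h
  exacts [D.no_loops _ h, (D.no_loops _ h).symm]

theorem ugAdj_iff_mem_ugNbrs : D.ugAdj u v ↔ v ∈ D.ugNbrs u := by
  refine ⟨fun h => mem_ugNbrs.mpr h.2.2.symm, fun h => ?_⟩
  exact ⟨mem_verts_of_mem_ugNbrs h, mem_verts_of_mem_ugNbrs (mem_ugNbrs_comm.mp h),
    (mem_ugNbrs.mp h).symm⟩

theorem inDeg_eq_card_inNbrs : D.inDeg v = (D.inNbrs v).card := by
  rw [inDeg, inNbrs, Finset.card_image_of_injOn]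
  rintro ⟨a₁, a₂⟩ h ⟨b₁, b₂⟩ h' (rfl : a₁ = b₁)
  simp_all

theorem outDeg_eq_card_outNbrs : D.outDeg v = (D.outNbrs v).card := by
  rw [outDeg, outNbrs, Finset.card_image_of_injOn]
  rintro ⟨a₁, a₂⟩ h ⟨b₁, b₂⟩ h' (rfl : a₂ = b₂)
  simp_all

theorem card_inNbrs_inter_singleton :
    (D.inNbrs v ∩ {u}).card = if (u, v) ∈ D.arcs then 1 else 0 := by
  split_ifs with h <;> simp [mem_inNbrs, h]

theorem card_outNbrs_inter_singleton :
    (D.outNbrs v ∩ {u}).card = if (v, u) ∈ D.arcs then 1 else 0 := by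
  split_ifs with h <;> simp [mem_outNbrs, h]

theorem card_eq_card_inter_add_card_inter {s : Finset ℕ} (hs : s ⊆ {u, v}) (huv : u ≠ v) :
    s.card = (s ∩ {u}).card + (s ∩ {v}).card := by
  rw [← Finset.card_union_of_disjoint, ← Finset.inter_union_distrib_left, ← Finset.insert_eq,
    Finset.inter_eq_left.mpr hs]
  exact Finset.disjoint_left.mpr fun x hx hx' => huv <| by
    simp only [Finset.mem_inter, Finset.mem_singleton] at hx hx'
    rw [← hx.2, hx'.2]

instance ugAdj_symm (D : Digraph') : Std.Symm D.ugAdj :=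
  ⟨fun _ _ h => ⟨h.2.1, h.1, h.2.2.symm⟩⟩

theorem ugAdj_induce {X : Finset ℕ} (h : D.ugAdj u v) (hu : u ∈ X) (hv : v ∈ X) :
    (D.induce X).ugAdj u v := by
  obtain ⟨hu', hv', h⟩ := h
  simp only [ugAdj, induce, Finset.mem_inter, Finset.mem_filter]
  tauto

theorem connected_of_forall_reflTransGen {r : ℕ} (hr : r ∈ D.verts)
    (h : ∀ v ∈ D.verts, Relation.ReflTransGen D.ugAdj r v) : D.Connected :=
  ⟨⟨r, hr⟩, fun u hu v hv => (symm_of _ (h u hu)).trans (h v hv)⟩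

theorem Connected.exists_boundary_ugAdj {P : ℕ → Prop} (hD : D.Connected) (hu : u ∈ D.verts)
    (hv : v ∈ D.verts) (hPu : P u) (hPv : ¬ P v) : ∃ x y, D.ugAdj x y ∧ P x ∧ ¬ P y := by
  induction hD.2 u hu v hv with
  | refl => exact absurd hPu hPv
  | @tail y z _ hyz ih =>
    by_cases hy : P y
    exacts [⟨y, z, hyz, hy, hPv⟩, ih (mem_verts_of_mem_ugNbrs (ugAdj_iff_mem_ugNbrs.mp hyz)) hy]

def Deficient (D : Digraph') (f : ℕ × ℕ) (v : ℕ) (Y : Finset ℕ) : Prop :=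
  (D.inNbrs v ∩ Y).card < f.1 ∨ (D.outNbrs v ∩ Y).card < f.2

theorem Deficient.mono {f : ℕ × ℕ} {Y Z : Finset ℕ} (h : D.Deficient f v Z)
    (hYZ : D.ugNbrs v ∩ Y ⊆ Z) : D.Deficient f v Y := by
  have hle {s : Finset ℕ} (hs : s ⊆ D.ugNbrs v) : (s ∩ Y).card ≤ (s ∩ Z).card :=
    Finset.card_le_card fun u hu => Finset.mem_inter.mpr
      ⟨(Finset.mem_inter.mp hu).1, hYZ (Finset.inter_subset_inter_right hs hu)⟩
  exact h.imp (hle Finset.subset_union_left).trans_lt (hle Finset.subset_union_right).trans_lt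

theorem deficient_empty_iff {f : ℕ × ℕ} : D.Deficient f v ∅ ↔ f ≠ (0, 0) := by
  obtain ⟨f₁, f₂⟩ := f
  simp only [Deficient, Finset.inter_empty, Finset.card_empty, ne_eq, Prod.mk.injEq]
  omega

theorem deficient_of_eq_degrees {f : ℕ × ℕ} {Y : Finset ℕ} (hf : f = (D.inDeg v, D.outDeg v))
    (ha : a ∈ D.ugNbrs v) (haY : a ∉ Y) : D.Deficient f v Y := by
  subst hf
  have hlt {s : Finset ℕ} (has : a ∈ s) : (s ∩ Y).card < s.card :=
    Finset.card_lt_card ⟨Finset.inter_subset_left, fun h => haY (Finset.mem_inter.mp (h has)).2⟩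
  rcases Finset.mem_union.mp ha with ha | ha
  · exact Or.inl (inDeg_eq_card_inNbrs ▸ hlt ha)
  · exact Or.inr (outDeg_eq_card_outNbrs ▸ hlt ha)

theorem inDeg_le_card_inNbrs_inter {H : Digraph'} {Y : Finset ℕ} (hA : H.arcs ⊆ D.arcs)
    (hY : H.verts ⊆ Y) : H.inDeg v ≤ (D.inNbrs v ∩ Y).card := by
  rw [inDeg_eq_card_inNbrs]
  refine Finset.card_le_card fun u hu => ?_
  have hu := mem_inNbrs.mp hu
  exact Finset.mem_inter.mpr ⟨mem_inNbrs.mpr (hA hu), hY (H.mem_fst _ hu)⟩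

theorem outDeg_le_card_outNbrs_inter {H : Digraph'} {Y : Finset ℕ} (hA : H.arcs ⊆ D.arcs)
    (hY : H.verts ⊆ Y) : H.outDeg v ≤ (D.outNbrs v ∩ Y).card := by
  rw [outDeg_eq_card_outNbrs]
  refine Finset.card_le_card fun u hu => ?_
  have hu := mem_outNbrs.mp hu
  exact Finset.mem_inter.mpr ⟨mem_outNbrs.mpr (hA hu), hY (H.mem_snd _ hu)⟩

theorem strictlyBidegenerate_induce_of_rank {β : Type*} [LinearOrder β] {X : Finset ℕ}
    {f : ℕ → ℕ × ℕ} (r : ℕ → β)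
    (h : ∀ v ∈ D.verts, v ∈ X → D.Deficient (f v) v (X.filter fun w => r v ≤ r w)) :
    (D.induce X).StrictlyBidegenerate f := by
  intro H hH hne
  obtain ⟨v, hv, hmin⟩ := H.verts.exists_min_image r hne
  have hvX := Finset.mem_inter.mp (hH.1 hv)
  have hA : H.arcs ⊆ D.arcs := hH.2.trans (Finset.filter_subset _ _)
  have hY : H.verts ⊆ X.filter fun w => r v ≤ r w := fun w hw =>
    Finset.mem_filter.mpr ⟨(Finset.mem_inter.mp (hH.1 hw)).2, hmin w hw⟩
  exact ⟨v, hv, (h v hvX.1 hvX.2).imp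
    (inDeg_le_card_inNbrs_inter hA hY).trans_lt (outDeg_le_card_outNbrs_inter hA hY).trans_lt⟩

section Tight

variable {F : Fin 2 → ℕ → ℕ × ℕ}

theorem Tight.apply_zero_add_apply_one (ht : D.Tight 2 F) (hv : v ∈ D.verts) :
    (F 0 v).1 + (F 1 v).1 = D.inDeg v ∧ (F 0 v).2 + (F 1 v).2 = D.outDeg v := by
  simpa [Fin.sum_univ_two] using ht v hv

theorem Tight.apply_eq_degrees (ht : D.Tight 2 F) (hv : v ∈ D.verts) {i j : Fin 2} (hij : i ≠ j)
    (hj : F j v = (0, 0)) : F i v = (D.inDeg v, D.outDeg v) := by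
  have h := ht.apply_zero_add_apply_one hv
  fin_cases i <;> fin_cases j <;> simp_all [Prod.ext_iff]

end Tight

def IsNonBacktrackingWalk (D : Digraph') (w : ℕ → ℕ) : Prop :=
  ∀ k, D.ugNbrs (w (k + 1)) = {w k, w (k + 2)} ∧ w (k + 2) ≠ w k

theorem IsCycleUG.exists_ugNbrs_eq_pair (hcyc : D.IsCycleUG) (ha : a ∈ D.ugNbrs v) :
    ∃ b, b ≠ a ∧ D.ugNbrs v = {a, b} := by
  obtain ⟨x, y, hxy, hv⟩ := Finset.card_eq_two.mp (hcyc.2 v (mem_verts_of_mem_ugNbrs ha))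
  rw [hv, Finset.mem_insert, Finset.mem_singleton] at ha
  rcases ha with rfl | rfl
  exacts [⟨y, hxy.symm, hv⟩, ⟨x, hxy, hv.trans (Finset.pair_comm _ _)⟩]

theorem IsCycleUG.exists_isNonBacktrackingWalk (hcyc : D.IsCycleUG) (ha : a ∈ D.ugNbrs v) :
    ∃ w, D.IsNonBacktrackingWalk w ∧ w 0 = v ∧ w 1 = a := by
  choose! next hnext using fun x y (h : x ∈ D.ugNbrs y) => hcyc.exists_ugNbrs_eq_pair h
  set step : ℕ × ℕ → ℕ × ℕ := fun p => (p.2, next p.1 p.2)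
  have hstep (k : ℕ) : step^[k + 1] (v, a) = step (step^[k] (v, a)) :=
    Function.iterate_succ_apply' _ _ _
  have hw (k : ℕ) : (step^[k] (v, a)).1 ∈ D.ugNbrs (step^[k + 1] (v, a)).1 := by
    induction k with
    | zero => exact mem_ugNbrs_comm.mp ha
    | succ k ih =>
      rw [hstep (k + 1), mem_ugNbrs_comm, hstep k]
      exact (hnext _ _ (hstep k ▸ ih)).2 ▸ Finset.mem_insert_of_mem (Finset.mem_singleton_self _)
  refine ⟨fun k => (step^[k] (v, a)).1, fun k => ?_, rfl, rfl⟩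
  have := hnext _ _ (hw k)
  simp only [hstep (k + 1), hstep k] at this ⊢
  exact ⟨this.2, this.1⟩

namespace IsNonBacktrackingWalk

variable {w : ℕ → ℕ}

theorem exists_first_return (hw : D.IsNonBacktrackingWalk w) :
    ∃ n, 0 < n ∧ w n = w 0 ∧ Set.InjOn w (Set.Iio n) := by
  have hmem (k : ℕ) : w k ∈ D.ugNbrs (w (k + 1)) := by simp [(hw k).1]
  have hverts (k : ℕ) : w k ∈ D.verts :=
    mem_verts_of_mem_ugNbrs (mem_ugNbrs_comm.mp (hmem k))
  have hrep : ∃ b, ∃ a < b, w a = w b := by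
    obtain ⟨x, y, hxy, hwxy⟩ :=
      Finite.exists_ne_map_eq_of_infinite fun k => (⟨w k, hverts k⟩ : D.verts)
    rcases Nat.lt_or_gt_of_ne hxy with h | h
    exacts [⟨y, x, h, congrArg Subtype.val hwxy⟩, ⟨x, y, h, congrArg Subtype.val hwxy.symm⟩]
  set n := Nat.find hrep
  obtain ⟨a, han, hwa⟩ : ∃ a < n, w a = w n := Nat.find_spec hrep
  have hinj : Set.InjOn w (Set.Iio n) := by
    intro i hi j hj hij
    by_contra h
    rcases Nat.lt_or_gt_of_ne h with h | h
    exacts [Nat.find_min hrep hj ⟨i, h, hij⟩, Nat.find_min hrep hi ⟨j, h, hij.symm⟩]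
  have hinj' {i j : ℕ} (hi : i < n) (hj : j < n) (h : w i = w j) : i = j := hinj hi hj h
  refine ⟨n, by omega, ?_, hinj⟩
  -- otherwise the neighbour `w (n - 1)` of `w n = w a` is `w (a - 1)` or `w (a + 1)`, against
  -- the minimality of `n` or the walk not backtracking
  obtain rfl : a = 0 := by
    by_contra ha
    have hpred : w (n - 1) ∈ D.ugNbrs (w n) := by
      simpa [show n - 1 + 1 = n by omega] using hmem (n - 1)
    have h := (hw (a - 1)).1
    rw [show a - 1 + 1 = a by omega, show a - 1 + 2 = a + 1 by omega, hwa] at h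
    rw [h, Finset.mem_insert, Finset.mem_singleton] at hpred
    rcases hpred with h' | h'
    · have := hinj' (by omega) (by omega) h'
      omega
    · by_cases han' : a + 1 = n
      · exact ne_of_mem_ugNbrs (hmem (n - 1)) (by rw [h', han', show n - 1 + 1 = n by omega])
      · have := hinj' (by omega) (by omega) h'
        exact (hw a).2 (by rw [hwa, show n = a + 2 by omega])
  exact hwa.symm

theorem exists_period (hw : D.IsNonBacktrackingWalk w) :
    ∃ n, 3 ≤ n ∧ Function.Periodic w n ∧ Set.InjOn w (Set.Iio n) := by
  obtain ⟨n, hn, hwn, hinj⟩ := hw.exists_first_return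
  have hn3 : 3 ≤ n := by
    have h₁ := ne_of_mem_ugNbrs (show w 0 ∈ D.ugNbrs (w 1) by simp [(hw 0).1])
    have h₂ := (hw 0).2
    by_contra h
    interval_cases n <;> simp_all
  have hsucc : w (n + 1) = w 1 := by
    have h := (hw (n - 1)).1
    rw [show n - 1 + 1 = n by omega, show n - 1 + 2 = n + 1 by omega, hwn] at h
    have h₁ : w 1 ∈ D.ugNbrs (w 0) := mem_ugNbrs_comm.mp (by simp [(hw 0).1])
    rw [h, Finset.mem_insert, Finset.mem_singleton] at h₁
    rcases h₁ with h₁ | h₁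
    · have := hinj (show 1 < n by omega) (show n - 1 < n by omega) h₁
      omega
    · exact h₁.symm
  have hdet {i j : ℕ} (h₀ : w i = w j) (h₁ : w (i + 1) = w (j + 1)) :
      w (i + 2) = w (j + 2) := by
    have h : w (i + 2) ∈ D.ugNbrs (w (i + 1)) := by simp [(hw i).1]
    rw [h₁, (hw j).1, Finset.mem_insert, Finset.mem_singleton, ← h₀] at h
    exact h.resolve_left (hw i).2
  have hper (k : ℕ) : w (k + n) = w k ∧ w (k + n + 1) = w (k + 1) := by
    induction k with
    | zero => exact ⟨by simpa using hwn, by simpa using hsucc⟩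
    | succ k ih =>
      refine ⟨by rw [add_right_comm]; exact ih.2, ?_⟩
      simpa only [add_right_comm _ 1 n, add_assoc] using hdet ih.1 ih.2
  exact ⟨n, hn3, fun k => (hper k).1, hinj⟩

theorem ugNbrs_eq_of_periodic (hw : D.IsNonBacktrackingWalk w) {n : ℕ} (hn : 0 < n)
    (hper : Function.Periodic w n) (m : ℕ) : D.ugNbrs (w m) = {w (m + n - 1), w (m + 1)} := by
  have h := (hw (m + n - 1)).1
  rwa [show m + n - 1 + 1 = m + n by omega, show m + n - 1 + 2 = m + 1 + n by omega, hper,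
    hper] at h

theorem exists_eq_of_periodic (hw : D.IsNonBacktrackingWalk w) (hconn : D.Connected) {n : ℕ}
    (hn : 0 < n) (hper : Function.Periodic w n) (hv : v ∈ D.verts) : ∃ m, w m = v := by
  have hnbrs := hw.ugNbrs_eq_of_periodic hn hper
  have hw₀ : w 0 ∈ D.verts := mem_verts_of_mem_ugNbrs (u := w 1) (by simp [hnbrs])
  have hreach := hconn.2 _ hw₀ v hv
  clear hv
  induction hreach with
  | refl => exact ⟨0, rfl⟩
  | tail _ hxy ih =>
    obtain ⟨m, rfl⟩ := ih
    have h := ugAdj_iff_mem_ugNbrs.mp hxy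
    rw [hnbrs, Finset.mem_insert, Finset.mem_singleton] at h
    rcases h with h | h
    exacts [⟨_, h.symm⟩, ⟨_, h.symm⟩]

end IsNonBacktrackingWalk

structure IsCycleEnum (D : Digraph') (n : ℕ) (g : ℤ → ℕ) : Prop where
  three_le : 3 ≤ n
  periodic : Function.Periodic g n
  injOn : Set.InjOn g (Set.Ico 0 n)
  surj : ∀ v ∈ D.verts, ∃ k, g k = v
  ugNbrs_eq : ∀ k, D.ugNbrs (g k) = {g (k - 1), g (k + 1)}

theorem IsNonBacktrackingWalk.isCycleEnum {w : ℕ → ℕ} (hw : D.IsNonBacktrackingWalk w)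
    (hconn : D.Connected) {n : ℕ} (hn : 3 ≤ n) (hper : Function.Periodic w n)
    (hinj : Set.InjOn w (Set.Iio n)) : D.IsCycleEnum n fun k => w (k % n).toNat := by
  have hw_mod (m : ℕ) : w (m % n) = w m := by
    simpa [Nat.mod_add_div'] using (hper.nat_mul (m / n) (m % n)).symm
  have hg {k : ℤ} {m : ℕ} (h : (m : ℤ) ≡ k [ZMOD n]) : w (k % n).toNat = w m := by
    rw [← hw_mod m, ← h, ← Int.natCast_mod, Int.toNat_natCast]
  refine ⟨hn, fun k => ?_, ?_, fun v hv => ?_, fun k => ?_⟩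
  · show w _ = w _
    rw [Int.add_emod_right]
  · intro a ha b hb hab
    simp only [Set.mem_Ico] at ha hb
    simp only [Int.emod_eq_of_lt ha.1 ha.2, Int.emod_eq_of_lt hb.1 hb.2] at hab
    have := hinj (show a.toNat < n by omega) (show b.toNat < n by omega) hab
    omega
  · obtain ⟨m, rfl⟩ := hw.exists_eq_of_periodic hconn (by omega) hper hv
    exact ⟨m, hg (Int.ModEq.refl _)⟩
  · set m := (k % n).toNat with hm
    have hmk : (m : ℤ) ≡ k [ZMOD n] := by
      rw [hm, Int.toNat_of_nonneg (Int.emod_nonneg _ (by omega))]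
      exact Int.mod_modEq k n
    rw [hw.ugNbrs_eq_of_periodic (by omega) hper, hg (m := m + n - 1), hg (m := m + 1)]
    · simpa using hmk.add_right 1
    · rw [show ((m + n - 1 : ℕ) : ℤ) = m - 1 + n by omega]
      exact Int.add_modEq_right.trans (hmk.sub_right 1)

namespace IsCycleEnum

variable {n : ℕ} {g : ℤ → ℕ}

theorem mem_ugNbrs_add_one (E : D.IsCycleEnum n g) (k : ℤ) : g (k + 1) ∈ D.ugNbrs (g k) := by
  simp [E.ugNbrs_eq]

theorem mem_ugNbrs_sub_one (E : D.IsCycleEnum n g) (k : ℤ) : g (k - 1) ∈ D.ugNbrs (g k) := by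
  simp [E.ugNbrs_eq]

theorem mem (E : D.IsCycleEnum n g) (k : ℤ) : g k ∈ D.verts :=
  mem_verts_of_mem_ugNbrs (E.mem_ugNbrs_add_one k)

theorem apply_emod (E : D.IsCycleEnum n g) (k : ℤ) : g (k % n) = g k := by
  rw [Int.emod_def, mul_comm]
  exact E.periodic.sub_int_mul_eq _

theorem emod_mem_Ico (E : D.IsCycleEnum n g) (k : ℤ) : k % n ∈ Set.Ico (0 : ℤ) n :=
  have := E.three_le
  ⟨Int.emod_nonneg _ (by omega), Int.emod_lt_of_pos _ (by omega)⟩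

theorem apply_eq_apply_iff (E : D.IsCycleEnum n g) {a b : ℤ} : g a = g b ↔ a ≡ b [ZMOD n] := by
  rw [← E.apply_emod a, ← E.apply_emod b]
  exact ⟨fun h => E.injOn (E.emod_mem_Ico a) (E.emod_mem_Ico b) h, fun h => congrArg g h⟩

theorem exists_mem_Ico (E : D.IsCycleEnum n g) (hv : v ∈ D.verts) :
    ∃ p ∈ Set.Ico (0 : ℤ) n, g p = v := by
  obtain ⟨k, rfl⟩ := E.surj v hv
  exact ⟨k % n, E.emod_mem_Ico k, E.apply_emod k⟩

theorem apply_sub_one_ne_apply_add_one (E : D.IsCycleEnum n g) (k : ℤ) :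
    g (k - 1) ≠ g (k + 1) := by
  intro h
  have h₂ := (E.apply_eq_apply_iff.mp h).dvd
  rw [show k + 1 - (k - 1) = 2 by ring] at h₂
  have := Int.le_of_dvd (by norm_num) h₂
  have := E.three_le
  omega

theorem card_verts (E : D.IsCycleEnum n g) : D.verts.card = n := by
  have : D.verts = (Finset.Ico 0 (n : ℤ)).image g := by
    ext v
    simp only [Finset.mem_image, Finset.mem_Ico]
    exact ⟨fun hv => by simpa using E.exists_mem_Ico hv, fun ⟨k, _, hk⟩ => hk ▸ E.mem k⟩
  rw [this, Finset.card_image_of_injOn (by simpa using E.injOn), Int.card_Ico]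
  simp

theorem comp_neg (E : D.IsCycleEnum n g) : D.IsCycleEnum n fun k => g (-k) where
  three_le := E.three_le
  periodic k := by
    simp only
    rw [neg_add', E.periodic.sub_eq]
  injOn a ha b hb h := by
    have := (E.apply_eq_apply_iff.mp h).neg
    simp only [neg_neg, Int.ModEq] at this
    rwa [Int.emod_eq_of_lt ha.1 ha.2, Int.emod_eq_of_lt hb.1 hb.2] at this
  surj v hv := by
    obtain ⟨k, rfl⟩ := E.surj v hv
    exact ⟨-k, by simp⟩
  ugNbrs_eq k := by
    rw [E.ugNbrs_eq, Finset.pair_comm]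
    congr 3 <;> ring

theorem connected_del (E : D.IsCycleEnum n g) : (D.del {g 0}).Connected := by
  have hn := E.three_le
  have hmem {p : ℤ} (hp : p ∈ Set.Ico (1 : ℤ) n) : g p ∈ D.verts \ {g 0} := by
    have : g p ≠ g 0 := fun h => by
      have := E.injOn ⟨by linarith [hp.1], hp.2⟩ ⟨le_rfl, by omega⟩ h
      linarith [hp.1]
    simp [E.mem p, this]
  have hreach {p : ℤ} (hp : p ∈ Set.Ico (1 : ℤ) n) :
      Relation.ReflTransGen (D.del {g 0}).ugAdj (g 1) (g p) := by
    obtain ⟨hp1, hpn⟩ := hp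
    induction p, hp1 using Int.leInduction with
    | base => rfl
    | succ p hp ih =>
      exact (ih (by omega)).tail <| ugAdj_induce
        (ugAdj_iff_mem_ugNbrs.mpr (E.mem_ugNbrs_add_one p)) (hmem ⟨hp, by omega⟩)
        (hmem ⟨by omega, hpn⟩)
  refine connected_of_forall_reflTransGen (by simpa [del, induce] using hmem ⟨le_rfl, by omega⟩)
    fun v hv => ?_
  simp only [del, induce, Finset.mem_inter, Finset.mem_sdiff, Finset.mem_singleton] at hv
  obtain ⟨p, hp, rfl⟩ := E.exists_mem_Ico hv.1
  have hp₀ : p ≠ 0 := by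
    rintro rfl
    exact hv.2.2 rfl
  exact hreach ⟨by have := hp.1; omega, hp.2⟩

end IsCycleEnum

theorem IsCycleUG.exists_isCycleEnum (hcyc : D.IsCycleUG) (ha : a ∈ D.ugNbrs v) :
    ∃ n g, D.IsCycleEnum n g ∧ g 0 = v ∧ g (-1) = a := by
  obtain ⟨w, hw, hw₀, hw₁⟩ := hcyc.exists_isNonBacktrackingWalk ha
  obtain ⟨n, hn, hper, hinj⟩ := hw.exists_period
  refine ⟨n, _, (hw.isCycleEnum hcyc.1 hn hper hinj).comp_neg, by simpa using hw₀, ?_⟩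
  simpa [Int.emod_eq_of_lt (show (0 : ℤ) ≤ 1 by norm_num) (show (1 : ℤ) < n by omega)] using hw₁

theorem IsCycleUG.exists_isCycleEnum_of_mem (hcyc : D.IsCycleUG) (hv : v ∈ D.verts) :
    ∃ n g, D.IsCycleEnum n g ∧ g 0 = v := by
  obtain ⟨a, ha⟩ : (D.ugNbrs v).Nonempty := Finset.card_pos.mp (by rw [hcyc.2 v hv]; norm_num)
  obtain ⟨n, g, E, hg, -⟩ := hcyc.exists_isCycleEnum ha
  exact ⟨n, g, E, hg⟩

theorem IsCycleUG.biconnected (hcyc : D.IsCycleUG) : D.Biconnected := by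
  obtain ⟨v, hv⟩ := hcyc.1.1
  obtain ⟨n, g, E, -⟩ := hcyc.exists_isCycleEnum_of_mem hv
  refine ⟨by rw [E.card_verts]; linarith [E.three_le], hcyc.1, fun x hx => ?_⟩
  obtain ⟨m, g', E', rfl⟩ := hcyc.exists_isCycleEnum_of_mem hx
  exact E'.connected_del

namespace IsCycleEnum

variable {n : ℕ} {g : ℤ → ℕ} {F : Fin 2 → ℕ → ℕ × ℕ}

/-- Colour position `p` with `c p` and remove vertices in the order of their positions. When
`g p` is removed, its only neighbours possibly left in its colour class are `g (p + 1)` and, for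
`p = 0`, `g (-1) = g (n - 1)`; `Z p` has to contain those of them that share its colour. -/
theorem dicolourable_of_deficient (E : D.IsCycleEnum n g) (c : ℤ → Fin 2) (Z : ℤ → Finset ℕ)
    (hZ : ∀ p ∈ Set.Ico (0 : ℤ) n, D.Deficient (F (c p) (g p)) (g p) (Z p))
    (hlast : c (n - 1) = c 0 → g (-1) ∈ Z 0)
    (hnext : ∀ p ∈ Set.Ico (0 : ℤ) n, p + 1 < n → c (p + 1) = c p → g (p + 1) ∈ Z p) :
    D.Dicolourable 2 F := by
  have hn := E.three_le
  set pos := Function.invFunOn g (Set.Ico (0 : ℤ) n)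
  have hpos {v : ℕ} (hv : v ∈ D.verts) : pos v ∈ Set.Ico (0 : ℤ) n ∧ g (pos v) = v :=
    Function.invFunOn_pos (E.exists_mem_Ico hv)
  refine ⟨fun v => c (pos v), fun i => strictlyBidegenerate_induce_of_rank pos fun v hv hvX => ?_⟩
  obtain rfl := (Finset.mem_filter.mp hvX).2
  beta_reduce
  obtain ⟨hp, hgp⟩ := hpos hv
  set p := pos v with hpv
  clear_value p
  have key := hZ p hp
  rw [hgp] at key
  refine key.mono fun w hw => ?_
  simp only [Finset.mem_inter, Finset.mem_filter] at hw
  obtain ⟨hwN, ⟨hw, hcw⟩, hpw⟩ := hw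
  obtain ⟨hq, hgq⟩ := hpos hw
  rw [← hgp, E.ugNbrs_eq, Finset.mem_insert, Finset.mem_singleton] at hwN
  rcases hwN with rfl | rfl
  · obtain rfl : p = 0 := by
      by_contra hp₀
      have := E.injOn hq ⟨by have := hp.1; omega, by have := hp.2; omega⟩ hgq
      omega
    have : pos (g (0 - 1)) = n - 1 := E.injOn hq ⟨by omega, by omega⟩
      (hgq.trans (by rw [← E.periodic]; ring_nf))
    exact hlast (this ▸ hcw)
  · by_cases hpn : p + 1 < n
    · have := E.injOn hq ⟨by have := hp.1; omega, hpn⟩ hgq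
      exact hnext p hp hpn (this ▸ hcw)
    · have := E.injOn hq ⟨le_rfl, by omega⟩
        (hgq.trans (by rw [show p + 1 = 0 + n by have := hp.2; omega, E.periodic]))
      have := hp.1
      omega

theorem dicolourable_alternating (E : D.IsCycleEnum n g)
    (hmixed : ∀ v ∈ D.verts, ∀ i, F i v ≠ (0, 0)) (i : Fin 2)
    (hodd : Odd n → D.Deficient (F i (g 0)) (g 0) {g (-1)}) : D.Dicolourable 2 F := by
  set c : ℤ → Fin 2 := fun p => if p % 2 = 0 then i else i + 1
  have hc (p q : ℤ) : c p = c q ↔ p % 2 = q % 2 := by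
    simp only [c]
    split_ifs <;> omega
  refine E.dicolourable_of_deficient c (fun p => if p = 0 ∧ Odd n then {g (-1)} else ∅)
    (fun p _ => ?_) (fun h => ?_) (fun p _ _ h => absurd ((hc _ _).mp h) (by omega))
  · split_ifs with h
    · obtain ⟨rfl, hn⟩ := h
      exact hodd hn
    · exact deficient_empty_iff.mpr (hmixed _ (E.mem p) _)
  · have := (hc _ _).mp h
    rw [if_pos ⟨rfl, Nat.odd_iff.mpr (by omega)⟩]
    exact Finset.mem_singleton_self _

end IsCycleEnum

def colourDown (n : ℤ) (e : Fin 2) (step : ℤ → Fin 2 → Fin 2) (p : ℤ) : Fin 2 :=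
  if 0 < p ∧ p < n then step p (colourDown n e step (p + 1)) else e
termination_by (n - p).toNat

theorem colourDown_of_mem {n p : ℤ} {e : Fin 2} {step : ℤ → Fin 2 → Fin 2} (h₀ : 0 < p)
    (hn : p < n) : colourDown n e step p = step p (colourDown n e step (p + 1)) := by
  rw [colourDown, if_pos ⟨h₀, hn⟩]

theorem colourDown_of_not_mem {n p : ℤ} {e : Fin 2} {step : ℤ → Fin 2 → Fin 2}
    (h : ¬ (0 < p ∧ p < n)) : colourDown n e step p = e := by
  rw [colourDown, if_neg h]

theorem IsCycleEnum.dicolourable_of_eq_zero_of_ne_zero {n : ℕ} {g : ℤ → ℕ}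
    {F : Fin 2 → ℕ → ℕ × ℕ} (E : D.IsCycleEnum n g) (ht : D.Tight 2 F) {i : Fin 2}
    (h₀ : F i (g 0) = (0, 0)) (h₁ : F i (g (-1)) ≠ (0, 0)) : D.Dicolourable 2 F := by
  have hn := E.three_le
  obtain ⟨c, hc₀, hcn, hstep⟩ : ∃ c : ℤ → Fin 2, c 0 = i + 1 ∧ c n = i + 1 ∧
      ∀ p : ℤ, 0 < p → p < n →
        c p = if F (c (p + 1) + 1) (g p) = (0, 0) then c (p + 1) else c (p + 1) + 1 :=
    ⟨colourDown n (i + 1) fun p c => if F (c + 1) (g p) = (0, 0) then c else c + 1,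
      colourDown_of_not_mem (by omega), colourDown_of_not_mem (by omega),
      fun _ h₀ hn => colourDown_of_mem h₀ hn⟩
  have hmixed {p : ℤ} (hp : p ∈ Set.Ico (0 : ℤ) n) (hfull : F (c p + 1) (g p) ≠ (0, 0)) :
      c (p + 1) ≠ c p ∧ F (c p) (g p) ≠ (0, 0) := by
    have hp₀ : p ≠ 0 := by
      rintro rfl
      rw [hc₀, show i + 1 + 1 = i by omega] at hfull
      exact hfull h₀
    rw [hstep p (by have := hp.1; omega) hp.2] at hfull ⊢
    split_ifs at hfull ⊢ with h
    · exact absurd h hfull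
    · exact ⟨by omega, h⟩
  refine E.dicolourable_of_deficient c
    (fun p => if F (c p + 1) (g p) = (0, 0) then {g (p + 1)} else ∅)
    (fun p hp => ?_) (fun h => ?_) (fun p hp _ h => ?_)
  · split_ifs with hfull
    · refine deficient_of_eq_degrees (ht.apply_eq_degrees (E.mem p) (by omega) hfull)
        (E.mem_ugNbrs_sub_one p) ?_
      simpa using E.apply_sub_one_ne_apply_add_one p
    · exact deficient_empty_iff.mpr (hmixed hp hfull).2
  · have hlast : c (n - 1) = c n + 1 := by
      rw [hstep (n - 1) (by omega) (by omega), sub_add_cancel, if_neg]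
      rwa [hcn, show i + 1 + 1 = i by omega, ← E.periodic.sub_eq, sub_sub_cancel_left]
    rw [hlast, hcn, hc₀] at h
    omega
  · split_ifs with hfull
    · exact Finset.mem_singleton_self _
    · exact absurd h (hmixed hp hfull).1

section HardPairs

variable {F : Fin 2 → ℕ → ℕ × ℕ}

theorem IsCycleUG.isHardPair_of_forall_eq_zero (hcyc : D.IsCycleUG) (ht : D.Tight 2 F)
    {i : Fin 2} (h : ∀ v ∈ D.verts, F i v = (0, 0)) : IsHardPair 2 D F :=
  IsHardPair.mono (i + 1) hcyc.biconnected
    (fun v hv => ht.apply_eq_degrees hv (by omega) (h v hv))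
    (fun k hk v hv => by rw [show k = i by omega]; exact h v hv)

theorem apply_eq_of_forall_not_deficient (hcard : (D.ugNbrs v).card = 2)
    (ht : (F 0 v).1 + (F 1 v).1 = D.inDeg v ∧ (F 0 v).2 + (F 1 v).2 = D.outDeg v)
    (hnd : ∀ a ∈ D.ugNbrs v, ∀ i, ¬ D.Deficient (F i v) v {a}) (ha : a ∈ D.ugNbrs v)
    (i : Fin 2) : F i v = ((D.inNbrs v ∩ {a}).card, (D.outNbrs v ∩ {a}).card) := by
  obtain ⟨x, y, hxy, hv⟩ := Finset.card_eq_two.mp hcard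
  have hin := card_eq_card_inter_add_card_inter
    (hv ▸ Finset.subset_union_left : D.inNbrs v ⊆ {x, y}) hxy
  have hout := card_eq_card_inter_add_card_inter
    (hv ▸ Finset.subset_union_right : D.outNbrs v ⊆ {x, y}) hxy
  rw [← inDeg_eq_card_inNbrs] at hin
  rw [← outDeg_eq_card_outNbrs] at hout
  have hx := hnd x (by simp [hv])
  have hy := hnd y (by simp [hv])
  simp only [Deficient, not_or, not_lt] at hx hy
  have := hx 0
  have := hx 1
  have := hy 0
  have := hy 1
  rw [hv, Finset.mem_insert, Finset.mem_singleton] at ha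
  rcases ha with rfl | rfl <;> fin_cases i <;> refine Prod.ext ?_ ?_ <;> simp <;> omega

theorem IsCycleEnum.isHardPair_of_forall_not_deficient {n : ℕ} {g : ℤ → ℕ}
    (E : D.IsCycleEnum n g) (hcyc : D.IsCycleUG) (ht : D.Tight 2 F)
    (hmixed : ∀ v ∈ D.verts, ∀ i, F i v ≠ (0, 0)) (hodd : Odd n)
    (hnd : ∀ v ∈ D.verts, ∀ a ∈ D.ugNbrs v, ∀ i, ¬ D.Deficient (F i v) v {a}) :
    IsHardPair 2 D F := by
  have hF {v a : ℕ} (hv : v ∈ D.verts) (ha : a ∈ D.ugNbrs v) (i : Fin 2) :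
      F i v = ((D.inNbrs v ∩ {a}).card, (D.outNbrs v ∩ {a}).card) :=
    apply_eq_of_forall_not_deficient (hcyc.2 v hv) (ht.apply_zero_add_apply_one hv) (hnd v hv)
      ha i
  have hswap (k : ℤ) : F 0 (g (k + 1)) = (F 0 (g k)).swap := by
    rw [hF (E.mem _) (E.mem_ugNbrs_sub_one (k + 1)), hF (E.mem k) (E.mem_ugNbrs_add_one k),
      add_sub_cancel_right]
    simp [card_inNbrs_inter_singleton, card_outNbrs_inter_singleton]
  -- going once around the odd cycle swaps the in- and out-budgets an odd number of times
  have hsymm (k : ℤ) : F 0 (g k) = (F 0 (g k)).swap := by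
    have hiter (m : ℕ) : F 0 (g (k + m)) = Prod.swap^[m] (F 0 (g k)) := by
      induction m with
      | zero => simp
      | succ m ih => rw [Function.iterate_succ_apply', ← ih, Nat.cast_succ, ← add_assoc, hswap]
    rw [← Function.Involutive.iterate_odd Prod.swap_swap hodd, ← hiter, E.periodic]
  have hone {v : ℕ} (hv : v ∈ D.verts) (i : Fin 2) : F i v = (1, 1) := by
    obtain ⟨k, rfl⟩ := E.surj v hv
    have hk := E.mem_ugNbrs_add_one k
    have hle (s : Finset ℕ) : (s ∩ {g (k + 1)}).card ≤ 1 :=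
      (Finset.card_le_card Finset.inter_subset_right).trans (Finset.card_singleton _).le
    have hs := hsymm k
    have hm := hmixed _ (E.mem k) 0
    rw [hF (E.mem k) hk 0] at hs hm
    rw [hF (E.mem k) hk i]
    simp only [Prod.swap_prod_mk, Prod.mk.injEq, ne_eq] at hs hm ⊢
    have := hle (D.inNbrs (g k))
    have := hle (D.outNbrs (g k))
    omega
  have hbid : D.Bidirected := fun a ha => by
    have h := hF (D.mem_snd a ha) (mem_ugNbrs.mpr (Or.inl ha)) 0
    rw [hone (D.mem_snd a ha), card_outNbrs_inter_singleton] at h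
    by_contra hba
    simp [hba] at h
  exact IsHardPair.bicycle 0 1 (by decide) ⟨hbid, hcyc, E.card_verts ▸ hodd⟩
    (fun v hv => hone hv 0) (fun v hv => hone hv 1) fun k h₀ h₁ => absurd h₁ (by omega)

end HardPairs

end Digraph'

theorem cycleUG_dicolourable_general
    (D : Digraph') (F : Fin 2 → ℕ → ℕ × ℕ)
    (htight : D.Tight 2 F)
    (hnothard : ¬ IsHardPair 2 D F)
    (hcyc : D.IsCycleUG) :
    D.Dicolourable 2 F := by
  by_cases hzero : ∃ v ∈ D.verts, ∃ i, F i v = (0, 0)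
  · obtain ⟨v, hv, i, hvi⟩ := hzero
    by_cases hall : ∀ w ∈ D.verts, F i w = (0, 0)
    · exact absurd (hcyc.isHardPair_of_forall_eq_zero htight hall) hnothard
    obtain ⟨w, hw, hwi⟩ := not_forall₂.mp hall
    obtain ⟨z, u, hzu, hz, hu⟩ :=
      hcyc.1.exists_boundary_ugAdj (P := fun x => F i x = (0, 0)) hv hw hvi hwi
    obtain ⟨n, g, E, rfl, rfl⟩ := hcyc.exists_isCycleEnum (ugAdj_iff_mem_ugNbrs.mp hzu)
    exact E.dicolourable_of_eq_zero_of_ne_zero htight hz hu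
  have hmixed : ∀ v ∈ D.verts, ∀ i, F i v ≠ (0, 0) := fun v hv i h => hzero ⟨v, hv, i, h⟩
  by_cases hslack : ∃ v ∈ D.verts, ∃ a ∈ D.ugNbrs v, ∃ i, D.Deficient (F i v) v {a}
  · obtain ⟨v, -, a, ha, i, h⟩ := hslack
    obtain ⟨n, g, E, rfl, rfl⟩ := hcyc.exists_isCycleEnum ha
    exact E.dicolourable_alternating hmixed i fun _ => h
  have hnoslack : ∀ v ∈ D.verts, ∀ a ∈ D.ugNbrs v, ∀ i, ¬ D.Deficient (F i v) v {a} :=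
    fun v hv a ha i h => hslack ⟨v, hv, a, ha, i, h⟩
  obtain ⟨v, hv⟩ := hcyc.1.1
  obtain ⟨n, g, E, -⟩ := hcyc.exists_isCycleEnum_of_mem hv
  rcases Nat.even_or_odd n with hn | hn
  · exact E.dicolourable_alternating hmixed 0 fun hodd => absurd hn (Nat.not_even_iff_odd.mpr hodd)
  · exact absurd (E.isHardPair_of_forall_not_deficient hcyc htight hmixed hn hnoslack) hnothard

/-- **Lemma (cycles).** Let `(D,F=(f₁,f₂))` be a valid tight non-hard pair whose underlying
graph is a cycle. Then `D` is `F`-dicolourable. -/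
theorem cycleUG_dicolourable
    (D : Digraph') (F : Fin 2 → ℕ → ℕ × ℕ)
    (hvalid : D.ValidPair 2 F) (htight : D.Tight 2 F)
    (hnothard : ¬ IsHardPair 2 D F)
    (hcyc : D.IsCycleUG) :
    D.Dicolourable 2 F :=
  cycleUG_dicolourable_general D F htight hnothard hcyc
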